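/- arXiv:1001.1516 — 3 statements merged into one kernel-verified Lean document; each statement's English description precedes it below -/
import Mathlib

section
/- Let ψ = (∂/∂x₁)^M θ with θ ∈ L²(ℝ²), so that ψ̂(ω) = (2πi ω₁)^M θ̂(ω) up to normalization, assume θ has Fourier decay of order L₂ in the second variable and 2M − 1/2 > L₂ > M ≥ 1. Then there is a constant C > 0 such that for all ξ of the form ξ = (ξ₁, rξ₁) with ξ₁ ≠ 0 and |r| ≤ 3/2, ∫_0^1 ∫_{|s|>2, |s|≤∞} |ψ̂(aξ₁, a^{1/2}(ξ₂ − sξ₁))|² a^{−3/2} ds da ≤ C |ξ₁|^{−2(L₂ − M)}. -/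
/-
Common setup: we work on ℝ² = `EuclideanSpace ℝ (Fin 2)`.
The Fourier transform uses the paper's convention f̂(ω) = ∫ f(x) e^{2πi ω·x} dx.
Since a general L² function need not be integrable, the Fourier transform of an
L² function `f` is represented by a function `g` together with the hypothesis
`IsFT f g`, which says that `g` is the Fourier transform of `f` in the weak
(tempered-distribution/Parseval) sense.
-/

noncomputable section
open MeasureTheory Filter Metric Complex
open scoped Real RealInnerProductSpace Pointwise

/-- The Euclidean plane ℝ². -/
abbrev E2 : Type := EuclideanSpace ℝ (Fin 2)

/-- The vector (a, b) ∈ ℝ². -/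
def v2 (a b : ℝ) : E2 := WithLp.toLp 2 ![a, b]

/-- Fourier transform with the paper's convention f̂(ω) = ∫ f(x) e^{2πi ω·x} dx. -/
def FT (f : E2 → ℂ) (ω : E2) : ℂ :=
  ∫ x : E2, Complex.exp (2 * Real.pi * Complex.I * ((⟪ω, x⟫ : ℝ) : ℂ)) * f x

/-- `g` is the (distributional) Fourier transform of `f`, expressed by the Parseval
pairing against Schwartz functions:  ∫ g·φ = ∫ f·φ̂. -/
def IsFT (f g : E2 → ℂ) : Prop :=
  ∀ φ : SchwartzMap E2 ℂ, ∫ ξ : E2, g ξ * φ ξ = ∫ x : E2, f x * FT (fun y => φ y) x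

/-- L² inner product ⟨f, g⟩ = ∫ f ḡ. -/
def ip (f g : E2 → ℂ) : ℂ := ∫ x : E2, f x * (starRingEnd ℂ) (g x)

/-- ψ_{ast}(x) = ψ((x₁−t₁−s(x₂−t₂))/a, (x₂−t₂)/√a). -/
def shDil (ψ : E2 → ℂ) (a s : ℝ) (t : E2) : E2 → ℂ := fun x =>
  ψ (v2 ((x 0 - t 0 - s * (x 1 - t 1)) / a) ((x 1 - t 1) / Real.sqrt a))

/-- Translation (Tt t f)(x) = f(x − t). -/
def Tt (t : E2) (f : E2 → ℂ) : E2 → ℂ := fun x => f (x - t)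

/-- Coordinate swap (ξ₁, ξ₂) ↦ (ξ₂, ξ₁); thus ψ^ν = ψ ∘ swap2 and ψ̂^ν = ψ̂ ∘ swap2. -/
def swap2 (ξ : E2) : E2 := v2 (ξ 1) (ξ 0)

/-- C_ψ = ∫ |ψ̂(ω)|²/|ω₁|² dω (expressed in terms of ψ̂). -/
def Cadm (hatψ : E2 → ℂ) : ℝ := ∫ ω : E2, ‖hatψ ω‖ ^ 2 / |ω 0| ^ 2

/-- ψ is a shearlet with M vanishing moments in the x₁-direction:
∫ |ψ̂(ω)|²/|ω₁|^{2M} dω < ∞ (expressed in terms of ψ̂). -/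
def IsShearlet (hatψ : E2 → ℂ) (M : ℕ) : Prop :=
  Integrable (fun ω : E2 => ‖hatψ ω‖ ^ 2 / |ω 0| ^ (2 * M)) volume

/-- Δ_ψ(ξ) = ∫_{−2}^{2}∫_0^1 |ψ̂(aξ₁, √a(ξ₂−sξ₁))|² a^{−3/2} da ds (in terms of ψ̂). -/
def Δsh (hatψ : E2 → ℂ) (ξ : E2) : ℝ :=
  ∫ s in Set.Icc (-2 : ℝ) 2, ∫ a in Set.Ioc (0 : ℝ) 1,
    ‖hatψ (v2 (a * ξ 0) (Real.sqrt a * (ξ 1 - s * ξ 0)))‖ ^ 2 * a ^ (-(3/2) : ℝ)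

/-- `g` has Fourier decay of order `L` in the `i`-th variable: |g(ξ)| ≤ C|ξ_i|^{−L},
written multiplicatively to avoid division by zero. -/
def FourierDecay (g : E2 → ℂ) (i : Fin 2) (L : ℝ) : Prop :=
  ∃ C > 0, ∀ ξ : E2, ‖g ξ‖ * |ξ i| ^ L ≤ C

/-- Indicator function of the cone 𝒞 = {ξ : |ξ₂| ≤ |ξ₁|}. -/
def coneInd : E2 → ℝ := Set.indicator {w : E2 | |w 1| ≤ |w 0|} (fun _ => (1 : ℝ))

/-- p̂₀ = Φ̂ ∗ χ_𝒞 (Φ̂ is real by assumption, so we take its real part). -/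
def p0hat (Φ : E2 → ℂ) (ξ : E2) : ℝ := ∫ η : E2, (FT Φ η).re * coneInd (ξ - η)

/-!
On the integration region `|s| > 2`, `|r| ≤ 3/2` forces `|r - s| ≥ |s|/4`, so the second
coordinate `√a (r - s) ξ₁` of the frequency is of size `√a |s| |ξ₁|`. The decay of `θ̂` in
that coordinate and the factor `(2π a |ξ₁|)^M` coming from `ψ = ∂₁^M θ` bound the integrand
by a constant times `|ξ₁|^{-2(L₂-M)} a^{2M-L₂-3/2} |s|^{-2L₂}`. This majorant separates in
`a` and `s`, and both factors are integrable exactly because `M < L₂ < 2M - 1/2`.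
-/

open Set

lemma pow_mul_rpow_neg_sq_mul_rpow_eq (M : ℕ) (L : ℝ) {c a x t : ℝ}
    (hc : 0 < c) (ha : 0 < a) (hx : 0 < x) (ht : 0 < t) :
    ((c * (a * x)) ^ M * (√a * t * x) ^ (-L)) ^ 2 * a ^ (-(3/2) : ℝ)
      = c ^ (2 * M) * x ^ (-(2 * (L - M))) * a ^ (2 * M - L - 3/2) * t ^ (-(2 * L)) := by
  refine Real.log_injOn_pos (mem_Ioi.2 (by positivity)) (mem_Ioi.2 (by positivity)) ?_
  simp (disch := positivity) only [Real.log_mul, Real.log_pow, Real.log_rpow, Real.log_sqrt]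
  push_cast
  ring

lemma integrableOn_abs_rpow_of_lt {q c : ℝ} (hq : q < -1) (hc : 0 < c) :
    IntegrableOn (fun s : ℝ => |s| ^ q) {s | c < |s|} := by
  have hIoi : IntegrableOn (fun s : ℝ => |s| ^ q) (Ioi c) :=
    (integrableOn_Ioi_rpow_of_lt hq hc).congr_fun
      (fun s hs => by rw [abs_of_pos (hc.trans hs)]) measurableSet_Ioi
  have hIio : IntegrableOn (fun s : ℝ => |s| ^ q) (Iio (-c)) := by
    rw [← neg_neg c] at hIoi
    simpa using hIoi.comp_neg_Iio
  have hset : {s : ℝ | c < |s|} = Iio (-c) ∪ Ioi c := by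
    ext s
    simp [lt_abs, lt_neg, or_comm]
  rw [hset]
  exact hIio.union hIoi

lemma setIntegral_setIntegral_le_mul {α β : Type*} [MeasurableSpace α] [MeasurableSpace β]
    {μ : Measure α} {ν : Measure β} {A : Set α} {B : Set β} (hA : MeasurableSet A)
    (hB : MeasurableSet B) {f : α → β → ℝ} {g : α → ℝ} {h : β → ℝ}
    (hg : IntegrableOn g A μ) (hh : IntegrableOn h B ν)
    (hf0 : ∀ a ∈ A, ∀ b ∈ B, 0 ≤ f a b) (hfgh : ∀ a ∈ A, ∀ b ∈ B, f a b ≤ g a * h b) :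
    ∫ a in A, ∫ b in B, f a b ∂ν ∂μ ≤ (∫ a in A, g a ∂μ) * ∫ b in B, h b ∂ν := by
  have hinner : ∀ a ∈ A, ∫ b in B, f a b ∂ν ≤ g a * ∫ b in B, h b ∂ν := fun a ha => by
    rw [← integral_const_mul]
    exact integral_mono_of_nonneg (ae_restrict_of_forall_mem hB (hf0 a ha)) (hh.const_mul _)
      (ae_restrict_of_forall_mem hB (hfgh a ha))
  rw [← integral_mul_const]
  exact integral_mono_of_nonneg
    (ae_restrict_of_forall_mem hA fun a ha => setIntegral_nonneg hB (hf0 a ha))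
    (hg.mul_const _) (ae_restrict_of_forall_mem hA hinner)

lemma FourierDecay.norm_le {g : E2 → ℂ} {i : Fin 2} {L : ℝ} (h : FourierDecay g i L) :
    ∃ C > 0, ∀ ξ : E2, ξ i ≠ 0 → ‖g ξ‖ ≤ C * |ξ i| ^ (-L) := by
  obtain ⟨C, hC, hg⟩ := h
  refine ⟨C, hC, fun ξ hξ => ?_⟩
  rw [Real.rpow_neg (abs_nonneg _), ← div_eq_mul_inv,
    le_div_iff₀ (Real.rpow_pos_of_pos (abs_pos.2 hξ) _)]
  exact hg ξ

lemma shear_integrand_le {hatψ hatθ : E2 → ℂ} {M : ℕ} {L C : ℝ} (hL : 0 ≤ L) (hC : 0 ≤ C)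
    (hrel : ∀ ω : E2, ‖hatψ ω‖ = (2 * π * |ω 0|) ^ M * ‖hatθ ω‖)
    (hθ : ∀ ξ : E2, ξ 1 ≠ 0 → ‖hatθ ξ‖ ≤ C * |ξ 1| ^ (-L))
    {a ξ1 r s : ℝ} (ha : 0 < a) (hξ1 : ξ1 ≠ 0) (hr : |r| ≤ 3/2) (hs : 2 < |s|) :
    ‖hatψ (v2 (a * ξ1) (√a * (r * ξ1 - s * ξ1)))‖ ^ 2 * a ^ (-(3/2) : ℝ)
      ≤ (2 * π) ^ (2 * M) * C ^ 2 * 4 ^ (2 * L) * |ξ1| ^ (-(2 * (L - M)))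
          * a ^ (2 * M - L - 3/2) * |s| ^ (-(2 * L)) := by
  set w := v2 (a * ξ1) (√a * (r * ξ1 - s * ξ1))
  have hx : 0 < |ξ1| := abs_pos.2 hξ1
  have hw0 : |w 0| = a * |ξ1| := by
    simp [w, v2, abs_mul, abs_of_pos ha]
  have hw1 : |w 1| = √a * |r - s| * |ξ1| := by
    simp [w, v2, ← sub_mul, abs_mul, mul_assoc]
  have hquarter : |s| / 4 ≤ |r - s| := by
    linarith [abs_sub_abs_le_abs_sub s r, abs_sub_comm s r]
  have hu : 0 < |r - s| := by linarith
  have hθw : ‖hatθ w‖ ≤ C * (√a * (|s| / 4) * |ξ1|) ^ (-L) := by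
    refine (hθ w (by rw [← abs_ne_zero, hw1]; positivity)).trans ?_
    have hbase : 0 < √a * (|s| / 4) * |ξ1| := by positivity
    rw [hw1]
    exact mul_le_mul_of_nonneg_left
      (Real.rpow_le_rpow_of_nonpos hbase (by gcongr) (neg_nonpos.2 hL)) hC
  calc ‖hatψ w‖ ^ 2 * a ^ (-(3/2) : ℝ)
      = ((2 * π * (a * |ξ1|)) ^ M * ‖hatθ w‖) ^ 2 * a ^ (-(3/2) : ℝ) := by rw [hrel, hw0]
    _ ≤ ((2 * π * (a * |ξ1|)) ^ M * (C * (√a * (|s| / 4) * |ξ1|) ^ (-L))) ^ 2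
          * a ^ (-(3/2) : ℝ) := by gcongr
    _ = C ^ 2 * (((2 * π * (a * |ξ1|)) ^ M * (√a * (|s| / 4) * |ξ1|) ^ (-L)) ^ 2
          * a ^ (-(3/2) : ℝ)) := by ring
    _ = C ^ 2 * ((2 * π) ^ (2 * M) * |ξ1| ^ (-(2 * (L - M))) * a ^ (2 * M - L - 3/2)
          * (|s| / 4) ^ (-(2 * L))) := by
      rw [pow_mul_rpow_neg_sq_mul_rpow_eq M L (by positivity) ha hx (by positivity)]
    _ = _ := by
      rw [Real.div_rpow (abs_nonneg s) (by norm_num), Real.rpow_neg (by norm_num : (0 : ℝ) ≤ 4),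
        div_inv_eq_mul]
      ring

theorem high_frequency_large_shear_estimate_general
    (hatψ hatθ : E2 → ℂ) (M : ℕ) (L2 : ℝ)
    (hrel : ∀ ω : E2, ‖hatψ ω‖ = (2 * Real.pi * |ω 0|) ^ M * ‖hatθ ω‖)
    (hdec : FourierDecay hatθ 1 L2)
    (hML2 : (M : ℝ) < L2) (hL2M : L2 < 2 * M - 1/2) :
    ∃ C > 0, ∀ ξ1 r : ℝ, ξ1 ≠ 0 → |r| ≤ 3/2 →
      (∫ a in Set.Ioc (0 : ℝ) 1, ∫ s in {s : ℝ | 2 < |s|},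
          ‖hatψ (v2 (a * ξ1) (Real.sqrt a * (r * ξ1 - s * ξ1)))‖ ^ 2 * a ^ (-(3/2) : ℝ))
        * |ξ1| ^ (2 * (L2 - M)) ≤ C := by
  obtain ⟨C0, hC0, hθ⟩ := hdec.norm_le
  have hA : IntegrableOn (fun a : ℝ => a ^ (2 * M - L2 - 3/2)) (Ioc 0 1) :=
    (intervalIntegral.intervalIntegrable_rpow' (by linarith)).1
  have hS : IntegrableOn (fun s : ℝ => |s| ^ (-(2 * L2))) {s | 2 < |s|} :=
    integrableOn_abs_rpow_of_lt (by linarith) two_pos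
  set K := (2 * π) ^ (2 * M) * C0 ^ 2 * 4 ^ (2 * L2)
  set A := ∫ a in Ioc (0 : ℝ) 1, a ^ (2 * M - L2 - 3/2)
  set S := ∫ s in {s : ℝ | 2 < |s|}, |s| ^ (-(2 * L2))
  have hA0 : 0 ≤ A := setIntegral_nonneg measurableSet_Ioc fun a ha => by have := ha.1; positivity
  refine ⟨K * A * S + 1, by positivity, fun ξ1 r hξ1 hr => ?_⟩
  have hx : 0 < |ξ1| := abs_pos.2 hξ1
  have hbound : (∫ a in Ioc (0 : ℝ) 1, ∫ s in {s : ℝ | 2 < |s|},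
        ‖hatψ (v2 (a * ξ1) (√a * (r * ξ1 - s * ξ1)))‖ ^ 2 * a ^ (-(3/2) : ℝ))
      ≤ (∫ a in Ioc (0 : ℝ) 1, K * |ξ1| ^ (-(2 * (L2 - M))) * a ^ (2 * M - L2 - 3/2)) * S :=
    setIntegral_setIntegral_le_mul measurableSet_Ioc
      (isOpen_lt continuous_const continuous_abs).measurableSet
      (hA.const_mul (K * |ξ1| ^ (-(2 * (L2 - M))))) hS
      (fun a ha s _ => by have := ha.1; positivity)
      (fun a ha _ hs => shear_integrand_le (by linarith) hC0.le hrel hθ ha.1 hξ1 hr hs)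
  rw [integral_const_mul] at hbound
  have hcancel : |ξ1| ^ (-(2 * (L2 - M))) * |ξ1| ^ (2 * (L2 - M)) = 1 := by
    rw [← Real.rpow_add hx, neg_add_cancel, Real.rpow_zero]
  calc _ ≤ K * |ξ1| ^ (-(2 * (L2 - M))) * A * S * |ξ1| ^ (2 * (L2 - M)) := by gcongr
    _ = K * A * S := by linear_combination (K * A * S) * hcancel
    _ ≤ K * A * S + 1 := by linarith

/-- for ψ = ∂₁^M θ (so |ψ̂(ω)| = (2π|ω₁|)^M |θ̂(ω)|) with θ̂ of Fourier
decay L₂ in the second variable, 2M − 1/2 > L₂ > M ≥ 1, and ξ = (ξ₁, rξ₁), |r| ≤ 3/2: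
∫_0^1∫_{|s|>2} |ψ̂(aξ₁, √a(ξ₂ − sξ₁))|² a^{−3/2} ds da ≤ C|ξ₁|^{−2(L₂−M)}. -/
theorem high_frequency_large_shear_estimate
    (ψ θ hatψ hatθ : E2 → ℂ) (M : ℕ) (L2 : ℝ)
    (hθ2 : MemLp θ 2 (volume : Measure E2))
    (hFTψ : IsFT ψ hatψ) (hFTθ : IsFT θ hatθ)
    (hrel : ∀ ω : E2, ‖hatψ ω‖ = (2 * Real.pi * |ω 0|) ^ M * ‖hatθ ω‖)
    (hdec : FourierDecay hatθ 1 L2)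
    (hM : 1 ≤ M) (hML2 : (M : ℝ) < L2) (hL2M : L2 < 2 * M - 1/2) :
    ∃ C > 0, ∀ ξ1 r : ℝ, ξ1 ≠ 0 → |r| ≤ 3/2 →
      (∫ a in Set.Ioc (0 : ℝ) 1, ∫ s in {s : ℝ | 2 < |s|},
          ‖hatψ (v2 (a * ξ1) (Real.sqrt a * (r * ξ1 - s * ξ1)))‖ ^ 2 * a ^ (-(3/2) : ℝ))
        * |ξ1| ^ (2 * (L2 - M)) ≤ C :=
  high_frequency_large_shear_estimate_general hatψ hatθ M L2 hrel hdec hML2 hL2M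
end
end

section
/- Let M ≥ 1 be an integer, A > 0, K ∈ ℕ, and let F : ℂ² → ℂ be an entire function satisfying |F(ζ)| ≤ C (1 + |ζ|)^K exp(2A |Im ζ|) for all ζ ∈ ℂ². Then Γ(ζ) := ∫_{−2}^{2} ∫_0^1 (aζ₁)^{2M} F(aζ₁, a^{1/2}(ζ₂ − sζ₁)) a^{−3/2} da ds defines an entire function on ℂ², and there is a constant C′ such that |Γ(ζ)| ≤ C′ (1 + |ζ|)^{2M + K} exp(2(1 + √2) A |Im ζ|) for all ζ ∈ ℂ². -/
/-
Common setup: we work on ℝ² = `EuclideanSpace ℝ (Fin 2)`.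
The Fourier transform uses the paper's convention f̂(ω) = ∫ f(x) e^{2πi ω·x} dx.
Since a general L² function need not be integrable, the Fourier transform of an
L² function `f` is represented by a function `g` together with the hypothesis
`IsFT f g`, which says that `g` is the Fourier transform of `f` in the weak
(tempered-distribution/Parseval) sense.
-/

noncomputable section
open MeasureTheory Filter Metric Complex
open scoped Real RealInnerProductSpace Pointwise

/-- ℂ² with the Euclidean norm. -/
abbrev Ec2 : Type := EuclideanSpace ℂ (Fin 2)

/-- The vector (a, b) ∈ ℂ². -/
def v2c (a b : ℂ) : Ec2 := WithLp.toLp 2 ![a, b]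

/-- |Im ζ| for ζ ∈ ℂ², i.e. the Euclidean norm of (Im ζ₁, Im ζ₂). -/
def imNorm (ζ : Ec2) : ℝ := Real.sqrt ((ζ 0).im ^ 2 + (ζ 1).im ^ 2)

/-!
Write `Φ(w) = w₁^{2M} F(w)`, so that the integrand of `Γ` is `Φ(M_{as} ζ) a^{-3/2}`. For
`a ∈ (0, 1]` and `|s| ≤ 2` the real matrix `M_{as}` has operator norm at most `1 + √2`, hence it
enlarges both `|ζ|` and `|Im ζ|` by at most that factor, while `a^{2M} a^{-3/2} ≤ 1` because
`M ≥ 1`. The integrand is therefore bounded by `C (1 + √2)^K (1 + |ζ|)^{2M+K} e^{2(1+√2)A|Im ζ|}`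
uniformly in `(s, a)`, and integrating over `[-2, 2] × (0, 1]`, of measure 4, gives the estimate.
This bound is locally uniform in `ζ`, so Cauchy's estimate dominates the derivatives of the
integrand too, and `Γ` can be differentiated under the integral sign.
-/

section Measurability

variable {α 𝕜 E F : Type*} [MeasurableSpace α] {μ : Measure α} [RCLike 𝕜]
  [NormedAddCommGroup E] [NormedSpace 𝕜 E] [NormedAddCommGroup F] [NormedSpace 𝕜 F]

theorem ContinuousLinearMap.eq_sum_smulRight_coord {ι : Type*} [Fintype ι]
    [FiniteDimensional 𝕜 E] (b : Module.Basis ι 𝕜 E) (L : E →L[𝕜] F) :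
    L = ∑ i, (LinearMap.toContinuousLinearMap (b.coord i)).smulRight (L (b i)) := by
  ext v
  simp only [FunLike.coe_sum, Finset.sum_apply, ContinuousLinearMap.smulRight_apply,
    LinearMap.coe_toContinuousLinearMap', Module.Basis.coord_apply, ← map_smul, ← map_sum,
    b.sum_repr]

theorem aestronglyMeasurable_fderiv_apply {G : α → E → F} {ζ₀ : E}
    (hG : ∀ ζ, AEStronglyMeasurable (G · ζ) μ) (hd : ∀ᵐ p ∂μ, DifferentiableAt 𝕜 (G p) ζ₀)
    (v : E) : AEStronglyMeasurable (fun p => fderiv 𝕜 (G p) ζ₀ v) μ := by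
  refine aestronglyMeasurable_of_tendsto_ae (f := fun (n : ℕ) p =>
    (n : 𝕜) • (G p (ζ₀ + (n : 𝕜)⁻¹ • v) - G p ζ₀)) atTop
    (fun n => ((hG _).sub (hG _)).const_smul _) ?_
  filter_upwards [hd] with p hp
  refine hp.hasFDerivAt.lim v ?_
  simpa only [RCLike.norm_natCast] using tendsto_natCast_atTop_atTop

theorem aestronglyMeasurable_fderiv [FiniteDimensional 𝕜 E] {G : α → E → F} {ζ₀ : E}
    (hG : ∀ ζ, AEStronglyMeasurable (G · ζ) μ) (hd : ∀ᵐ p ∂μ, DifferentiableAt 𝕜 (G p) ζ₀) :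
    AEStronglyMeasurable (fun p => fderiv 𝕜 (G p) ζ₀) μ := by
  let b := Module.finBasis 𝕜 E
  rw [funext fun p => (fderiv 𝕜 (G p) ζ₀).eq_sum_smulRight_coord b]
  exact Finset.aestronglyMeasurable_fun_sum _ fun i _ =>
    (ContinuousLinearMap.smulRightL 𝕜 E F _).continuous.comp_aestronglyMeasurable
      (aestronglyMeasurable_fderiv_apply hG hd (b i))

end Measurability

theorem differentiable_integral_of_locally_dominated {α E F : Type*} [MeasurableSpace α]
    {μ : Measure α} [NormedAddCommGroup E] [NormedSpace ℂ E] [FiniteDimensional ℂ E]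
    [NormedAddCommGroup F] [NormedSpace ℂ F] {G : α → E → F}
    (hG : ∀ ζ, AEStronglyMeasurable (G · ζ) μ) (hd : ∀ᵐ p ∂μ, Differentiable ℂ (G p))
    (hbound : ∀ ζ₀, ∃ r > 0, ∃ B : α → ℝ, Integrable B μ ∧
      ∀ᵐ p ∂μ, ∀ ζ ∈ ball ζ₀ r, ‖G p ζ‖ ≤ B p) :
    Differentiable ℂ fun ζ => ∫ p, G p ζ ∂μ := by
  intro ζ₀
  obtain ⟨r, hr, B, hB, hGB⟩ := hbound ζ₀
  -- Cauchy's estimate on `ball ζ (r / 2)`, which `G p` maps into a ball of radius `2 B p`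
  have hderiv : ∀ᵐ p ∂μ, ∀ ζ ∈ ball ζ₀ (r / 2), ‖fderiv ℂ (G p) ζ‖ ≤ 4 * B p / r := by
    filter_upwards [hd, hGB] with p hp hpB ζ hζ
    have hsub : ball ζ (r / 2) ⊆ ball ζ₀ r := ball_subset_ball' (by linarith [mem_ball.1 hζ])
    have hmaps : Set.MapsTo (G p) (ball ζ (r / 2)) (closedBall (G p ζ) (2 * B p)) := by
      intro w hw
      rw [mem_closedBall, dist_eq_norm]
      linarith [norm_sub_le (G p w) (G p ζ), hpB w (hsub hw),
        hpB ζ (hsub (mem_ball_self (half_pos hr)))]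
    calc ‖fderiv ℂ (G p) ζ‖ ≤ 2 * B p / (r / 2) :=
          Complex.norm_fderiv_le_div_of_mapsTo_ball hp.differentiableOn hmaps (half_pos hr)
      _ = 4 * B p / r := by field_simp; ring
  exact (hasFDerivAt_integral_of_dominated_of_fderiv_le (ball_mem_nhds ζ₀ (half_pos hr))
    (Eventually.of_forall hG)
    (hB.mono' (hG ζ₀) (hGB.mono fun p hp => hp ζ₀ (mem_ball_self hr)))
    (aestronglyMeasurable_fderiv hG (hd.mono fun p hp => hp ζ₀)) hderiv
    ((hB.const_mul 4).div_const r)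
    (hd.mono fun p hp ζ _ => (hp ζ).hasFDerivAt)).differentiableAt

/-- The matrix `M_{as}`. -/
def shear (a s : ℝ) : Ec2 →L[ℂ] Ec2 :=
  Matrix.toEuclideanCLM (𝕜 := ℂ) (n := Fin 2) !![(a : ℂ), 0; -(s * √a : ℝ), (√a : ℂ)]

lemma shear_apply (a s : ℝ) (ζ : Ec2) : shear a s ζ = v2c (a * ζ 0) (√a * (ζ 1 - s * ζ 0)) := by
  ext i
  fin_cases i
  · simp [shear, v2c, Matrix.mulVec, dotProduct]
  · simp only [shear, v2c, Matrix.ofLp_toEuclideanCLM, Matrix.mulVec, dotProduct,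
      Fin.sum_univ_two, Matrix.of_apply, Matrix.cons_val', Matrix.cons_val_zero,
      Matrix.cons_val_one, Matrix.cons_val_fin_one]
    push_cast
    ring

lemma continuous_shear_apply (ζ : Ec2) : Continuous fun p : ℝ × ℝ => shear p.2 p.1 ζ := by
  simp only [shear_apply, v2c]
  fun_prop

lemma sq_mul_add_mul_sq_le {a u v t : ℝ} (ha : a ∈ Set.Icc (0 : ℝ) 1) (ht : |t| ≤ v + 2 * u) :
    (a * u) ^ 2 + a * t ^ 2 ≤ (1 + √2) ^ 2 * (u ^ 2 + v ^ 2) := by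
  obtain ⟨ha0, ha1⟩ := ha
  have h2 : √2 ^ 2 = 2 := Real.sq_sqrt zero_le_two
  have hau : (a * u) ^ 2 ≤ u ^ 2 := by
    rw [mul_pow]
    exact mul_le_of_le_one_left (sq_nonneg u) (pow_le_one₀ ha0 ha1)
  have hat : a * t ^ 2 ≤ (v + 2 * u) ^ 2 := (mul_le_of_le_one_left (sq_nonneg t) ha1).trans
    (sq_le_sq' (neg_le_of_abs_le ht) (le_of_abs_le ht))
  have h3 : 0 < 2 * √2 - 2 := by nlinarith [Real.sqrt_nonneg 2]
  -- `(3 + 2√2)(u² + v²) - u² - (v + 2u)²` times `2√2 - 2` is a perfect square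
  have key : 4 * u * v ≤ (2 * √2 - 2) * u ^ 2 + (2 + 2 * √2) * v ^ 2 := by
    nlinarith [sq_nonneg ((2 * √2 - 2) * u - 2 * v)]
  nlinarith

theorem norm_shear_le {a s : ℝ} (ha : a ∈ Set.Icc (0 : ℝ) 1) (hs : |s| ≤ 2) (ζ : Ec2) :
    ‖shear a s ζ‖ ≤ (1 + √2) * ‖ζ‖ := by
  have hsq : ‖shear a s ζ‖ ^ 2 = (a * ‖ζ 0‖) ^ 2 + a * ‖ζ 1 - s * ζ 0‖ ^ 2 := by
    simp [shear_apply, EuclideanSpace.norm_sq_eq, Fin.sum_univ_two, v2c, mul_pow,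
      Real.sq_sqrt ha.1, abs_of_nonneg ha.1]
  have ht : |‖ζ 1 - s * ζ 0‖| ≤ ‖ζ 1‖ + 2 * ‖ζ 0‖ := by
    rw [abs_norm]
    refine (norm_sub_le _ _).trans ?_
    rw [norm_mul, Complex.norm_real, Real.norm_eq_abs]
    gcongr
  rw [← sq_le_sq₀ (norm_nonneg _) (by positivity), hsq, mul_pow (1 + √2),
    EuclideanSpace.norm_sq_eq, Fin.sum_univ_two]
  exact sq_mul_add_mul_sq_le ha ht

theorem imNorm_shear_le {a s : ℝ} (ha : a ∈ Set.Icc (0 : ℝ) 1) (hs : |s| ≤ 2) (ζ : Ec2) :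
    imNorm (shear a s ζ) ≤ (1 + √2) * imNorm ζ := by
  have ht : |(ζ 1).im - s * (ζ 0).im| ≤ |(ζ 1).im| + 2 * |(ζ 0).im| := by
    refine (abs_sub _ _).trans ?_
    rw [abs_mul]
    gcongr
  have h := sq_mul_add_mul_sq_le ha ht
  rw [sq_abs, sq_abs] at h
  rw [imNorm, imNorm, ← Real.sqrt_sq (by positivity : 0 ≤ 1 + √2), ← Real.sqrt_mul (sq_nonneg _)]
  refine Real.sqrt_le_sqrt (le_of_eq_of_le ?_ h)
  simp [shear_apply, v2c, mul_pow, Real.sq_sqrt ha.1]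

lemma imNorm_le_norm (ζ : Ec2) : imNorm ζ ≤ ‖ζ‖ := by
  have h : ∀ z : ℂ, z.im ^ 2 ≤ ‖z‖ ^ 2 := fun z =>
    sq_le_sq.2 ((Complex.abs_im_le_norm z).trans_eq (abs_norm z).symm)
  rw [imNorm, EuclideanSpace.norm_eq, Fin.sum_univ_two]
  exact Real.sqrt_le_sqrt (add_le_add (h _) (h _))

theorem norm_comp_shear_le {K : ℕ} {A C : ℝ} (hA : 0 ≤ A) (hC : 0 ≤ C) {F : Ec2 → ℂ}
    (hbd : ∀ ζ : Ec2, ‖F ζ‖ ≤ C * (1 + ‖ζ‖) ^ K * Real.exp (2 * A * imNorm ζ))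
    {a s : ℝ} (ha : a ∈ Set.Icc (0 : ℝ) 1) (hs : |s| ≤ 2) (ζ : Ec2) :
    ‖F (shear a s ζ)‖ ≤ C * (1 + √2) ^ K * (1 + ‖ζ‖) ^ K * Real.exp (2 * (1 + √2) * A * imNorm ζ) :=
  calc ‖F (shear a s ζ)‖
      ≤ C * (1 + ‖shear a s ζ‖) ^ K * Real.exp (2 * A * imNorm (shear a s ζ)) := hbd _
    _ ≤ C * ((1 + √2) * (1 + ‖ζ‖)) ^ K * Real.exp (2 * (1 + √2) * A * imNorm ζ) := by
        gcongr C * ?_ ^ K * Real.exp ?_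
        · linarith [norm_shear_le ha hs ζ, Real.sqrt_nonneg 2]
        · nlinarith [imNorm_shear_le ha hs ζ]
    _ = C * (1 + √2) ^ K * (1 + ‖ζ‖) ^ K * Real.exp (2 * (1 + √2) * A * imNorm ζ) := by
        rw [mul_pow]; ring

lemma rpow_natCast_mul_rpow_neg_le_one {a x : ℝ} {n : ℕ} (ha : a ∈ Set.Ioc (0 : ℝ) 1)
    (hx : x ≤ n) : a ^ n * a ^ (-x) ≤ 1 := by
  rw [← Real.rpow_natCast, ← Real.rpow_add ha.1]
  exact Real.rpow_le_one ha.1.le ha.2 (by linarith)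

/-- The integrand of `Γ` at `p = (s, a)`. -/
def gammaIntegrand (M : ℕ) (F : Ec2 → ℂ) (p : ℝ × ℝ) (ζ : Ec2) : ℂ :=
  shear p.2 p.1 ζ 0 ^ (2 * M) * F (shear p.2 p.1 ζ) * ((p.2 ^ (-(3/2) : ℝ) : ℝ) : ℂ)

lemma gammaIntegrand_apply (M : ℕ) (F : Ec2 → ℂ) (s a : ℝ) (ζ : Ec2) :
    gammaIntegrand M F (s, a) ζ = ((a : ℂ) * ζ 0) ^ (2 * M)
      * F (v2c ((a : ℂ) * ζ 0) ((Real.sqrt a : ℂ) * (ζ 1 - (s : ℂ) * ζ 0)))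
      * ((a ^ (-(3/2) : ℝ) : ℝ) : ℂ) := by
  simp only [gammaIntegrand, shear_apply]
  rfl

lemma measurable_gammaIntegrand (M : ℕ) {F : Ec2 → ℂ} (hF : Continuous F) (ζ : Ec2) :
    Measurable (gammaIntegrand M F · ζ) := by
  have h := continuous_shear_apply ζ
  unfold gammaIntegrand
  fun_prop

lemma differentiable_gammaIntegrand (M : ℕ) {F : Ec2 → ℂ} (hF : Differentiable ℂ F)
    (p : ℝ × ℝ) : Differentiable ℂ (gammaIntegrand M F p) := by
  unfold gammaIntegrand
  fun_prop

theorem norm_gammaIntegrand_le {M K : ℕ} (hM : 1 ≤ M) {A C : ℝ} (hA : 0 ≤ A) (hC : 0 ≤ C)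
    {F : Ec2 → ℂ} (hbd : ∀ ζ : Ec2, ‖F ζ‖ ≤ C * (1 + ‖ζ‖) ^ K * Real.exp (2 * A * imNorm ζ))
    {p : ℝ × ℝ} (hp : p ∈ Set.Icc (-2 : ℝ) 2 ×ˢ Set.Ioc (0 : ℝ) 1) (ζ : Ec2) :
    ‖gammaIntegrand M F p ζ‖
      ≤ C * (1 + √2) ^ K * (1 + ‖ζ‖) ^ (2 * M + K) * Real.exp (2 * (1 + √2) * A * imNorm ζ) := by
  obtain ⟨hs, ha⟩ := hp
  have hweight : p.2 ^ (2 * M) * p.2 ^ (-(3/2) : ℝ) ≤ 1 :=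
    rpow_natCast_mul_rpow_neg_le_one ha (by push_cast; linarith [(Nat.one_le_cast (α := ℝ)).2 hM])
  have hfirst : ‖shear p.2 p.1 ζ 0‖ = p.2 * ‖ζ 0‖ := by
    simp [shear_apply, v2c, abs_of_pos ha.1]
  have hζ0 : ‖ζ 0‖ ≤ 1 + ‖ζ‖ := (PiLp.norm_apply_le ζ 0).trans (le_add_of_nonneg_left zero_le_one)
  calc ‖gammaIntegrand M F p ζ‖
      = (p.2 ^ (2 * M) * p.2 ^ (-(3/2) : ℝ)) * ‖ζ 0‖ ^ (2 * M) * ‖F (shear p.2 p.1 ζ)‖ := by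
        rw [gammaIntegrand, norm_mul, norm_mul, norm_pow, hfirst, Complex.norm_real,
          Real.norm_of_nonneg (Real.rpow_nonneg ha.1.le _)]
        ring
    _ ≤ 1 * (1 + ‖ζ‖) ^ (2 * M)
          * (C * (1 + √2) ^ K * (1 + ‖ζ‖) ^ K * Real.exp (2 * (1 + √2) * A * imNorm ζ)) := by
        gcongr
        exact norm_comp_shear_le hA hC hbd (Set.Ioc_subset_Icc_self ha) (abs_le.2 hs) ζ
    _ = _ := by ring

lemma mul_one_add_norm_pow_mul_exp_le_of_mem_ball {C A : ℝ} (hC : 0 ≤ C) (hA : 0 ≤ A) (N : ℕ)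
    {ζ₀ ζ : Ec2} (hζ : ζ ∈ ball ζ₀ 1) :
    C * (1 + ‖ζ‖) ^ N * Real.exp (A * imNorm ζ)
      ≤ C * (1 + (‖ζ₀‖ + 1)) ^ N * Real.exp (A * (‖ζ₀‖ + 1)) := by
  have hζ : ‖ζ‖ ≤ ‖ζ₀‖ + 1 := by
    linarith [norm_le_norm_add_norm_sub' ζ ζ₀, mem_ball_iff_norm.1 hζ]
  gcongr
  exact (imNorm_le_norm ζ).trans hζ

abbrev shearParamMeasure : Measure (ℝ × ℝ) :=
  (volume.restrict (Set.Icc (-2 : ℝ) 2)).prod (volume.restrict (Set.Ioc (0 : ℝ) 1))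

lemma ae_mem_shearParams :
    ∀ᵐ p ∂shearParamMeasure, p ∈ Set.Icc (-2 : ℝ) 2 ×ˢ Set.Ioc (0 : ℝ) 1 := by
  rw [shearParamMeasure, Measure.prod_restrict]
  exact ae_restrict_mem (measurableSet_Icc.prod measurableSet_Ioc)

lemma shearParamMeasure_real_univ : shearParamMeasure.real Set.univ = 4 := by
  rw [Measure.real, ← Set.univ_prod_univ, Measure.prod_prod]
  norm_num

/-- if F is entire on ℂ² of exponential type
|F(ζ)| ≤ C(1+|ζ|)^K e^{2A|Im ζ|}, then
Γ(ζ) = ∫_{−2}^{2}∫_0^1 (aζ₁)^{2M} F(aζ₁, √a(ζ₂ − sζ₁)) a^{−3/2} da ds is entire and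
|Γ(ζ)| ≤ C′(1+|ζ|)^{2M+K} e^{2(1+√2)A|Im ζ|}. -/
theorem gamma_entire_exponential_type
    (M : ℕ) (hM : 1 ≤ M) (A : ℝ) (hA : 0 < A) (K : ℕ)
    (F : Ec2 → ℂ) (hF : Differentiable ℂ F)
    (C : ℝ) (hC : 0 < C)
    (hbd : ∀ ζ : Ec2, ‖F ζ‖ ≤ C * (1 + ‖ζ‖) ^ K * Real.exp (2 * A * imNorm ζ)) :
    Differentiable ℂ (fun ζ : Ec2 =>
      ∫ s in Set.Icc (-2 : ℝ) 2, ∫ a in Set.Ioc (0 : ℝ) 1,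
        ((a : ℂ) * ζ 0) ^ (2 * M)
          * F (v2c ((a : ℂ) * ζ 0) ((Real.sqrt a : ℂ) * (ζ 1 - (s : ℂ) * ζ 0)))
          * ((a ^ (-(3/2) : ℝ) : ℝ) : ℂ)) ∧
    ∃ C' > 0, ∀ ζ : Ec2,
      ‖∫ s in Set.Icc (-2 : ℝ) 2, ∫ a in Set.Ioc (0 : ℝ) 1,
          ((a : ℂ) * ζ 0) ^ (2 * M)
            * F (v2c ((a : ℂ) * ζ 0) ((Real.sqrt a : ℂ) * (ζ 1 - (s : ℂ) * ζ 0)))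
            * ((a ^ (-(3/2) : ℝ) : ℝ) : ℂ)‖
        ≤ C' * (1 + ‖ζ‖) ^ (2 * M + K)
            * Real.exp (2 * (1 + Real.sqrt 2) * A * imNorm ζ) := by
  simp only [← gammaIntegrand_apply]
  set B : Ec2 → ℝ := fun ζ => C * (1 + √2) ^ K * (1 + ‖ζ‖) ^ (2 * M + K)
    * Real.exp (2 * (1 + √2) * A * imNorm ζ)
  have hbound : ∀ᵐ p ∂shearParamMeasure, ∀ ζ, ‖gammaIntegrand M F p ζ‖ ≤ B ζ :=
    ae_mem_shearParams.mono fun p hp => norm_gammaIntegrand_le hM hA.le hC.le hbd hp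
  have hmeas : ∀ ζ, AEStronglyMeasurable (gammaIntegrand M F · ζ) shearParamMeasure := fun ζ =>
    (measurable_gammaIntegrand M hF.continuous ζ).aestronglyMeasurable
  have hprod : ∀ ζ, ∫ s in Set.Icc (-2 : ℝ) 2, ∫ a in Set.Ioc (0 : ℝ) 1, gammaIntegrand M F (s, a) ζ
      = ∫ p, gammaIntegrand M F p ζ ∂shearParamMeasure := fun ζ =>
    (integral_prod _ ((integrable_const (B ζ)).mono' (hmeas ζ) (hbound.mono fun p hp => hp ζ))).symm
  simp only [hprod]
  refine ⟨differentiable_integral_of_locally_dominated hmeas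
    (ae_of_all _ (differentiable_gammaIntegrand M hF)) fun ζ₀ => ⟨1, one_pos, _, integrable_const _,
      hbound.mono fun p hp ζ hζ => (hp ζ).trans
        (mul_one_add_norm_pow_mul_exp_le_of_mem_ball (by positivity) (by positivity) _ hζ)⟩,
    4 * (C * (1 + √2) ^ K), by positivity, fun ζ => ?_⟩
  calc ‖∫ p, gammaIntegrand M F p ζ ∂shearParamMeasure‖
      ≤ B ζ * shearParamMeasure.real Set.univ :=
        norm_integral_le_of_norm_le_const (hbound.mono fun p hp => hp ζ)
    _ = 4 * (C * (1 + √2) ^ K) * (1 + ‖ζ‖) ^ (2 * M + K)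
          * Real.exp (2 * (1 + √2) * A * imNorm ζ) := by
        rw [shearParamMeasure_real_univ]; ring
end
end

section
/- Let ψ be a shearlet with M > 1 vanishing moments in the x₁-direction and write ψ̂(ξ) = ξ₁^{M−1} μ̂(ξ), where μ is a shearlet with one vanishing moment in the x₁-direction. Then for every 0 < δ ≤ 1 and every ξ ∈ ℝ² with 0 < |ξ₁| ≤ δ one has Δ_ψ(ξ) ≤ C_μ δ^{2(M−1)}. -/
/-
Common setup: we work on ℝ² = `EuclideanSpace ℝ (Fin 2)`.
The Fourier transform uses the paper's convention f̂(ω) = ∫ f(x) e^{2πi ω·x} dx.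
Since a general L² function need not be integrable, the Fourier transform of an
L² function `f` is represented by a function `g` together with the hypothesis
`IsFT f g`, which says that `g` is the Fourier transform of `f` in the weak
(tempered-distribution/Parseval) sense.
-/

noncomputable section
open MeasureTheory Filter Metric Complex
open scoped Real RealInnerProductSpace Pointwise

/-!
For `0 < a ≤ 1` and `|ξ₁| ≤ δ` the factor `|aξ₁|^{2(M−1)}` in `|ψ̂|² = |ω₁|^{2(M−1)} |μ̂|²` is at most
`δ^{2(M−1)}`, so `Δ_ψ(ξ) ≤ δ^{2(M−1)} Δ_μ(ξ)`. The substitution `ω = (aξ₁, √a (ξ₂ − sξ₁))` is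
injective on `a > 0` with Jacobian `√a ξ₁²`, and since `|ω₁|² = a² ξ₁²` it carries
`|μ̂(ω)|² / |ω₁|² dω` to `|μ̂(ω)|² a^{−3/2} ds da`; hence `Δ_μ(ξ) ≤ C_μ`.
-/

lemma MeasureTheory.integral_integral_le_integral_prod {α β : Type*} [MeasurableSpace α]
    [MeasurableSpace β] {μ : Measure α} {ν : Measure β} [SFinite μ] [SFinite ν]
    {f g : α × β → ℝ} (hf : ∀ᵐ p ∂μ.prod ν, 0 ≤ f p) (hfg : ∀ᵐ p ∂μ.prod ν, f p ≤ g p)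
    (hg : Integrable g (μ.prod ν)) :
    ∫ x, ∫ y, f (x, y) ∂ν ∂μ ≤ ∫ p, g p ∂μ.prod ν := by
  rw [integral_prod g hg]
  refine integral_mono_of_nonneg ?_ hg.integral_prod_left ?_
  · filter_upwards [Measure.ae_ae_of_ae_prod hf] with x hfx
    exact integral_nonneg_of_ae hfx
  · filter_upwards [Measure.ae_ae_of_ae_prod hf, Measure.ae_ae_of_ae_prod hfg,
      hg.prod_right_ae] with x hfx hfgx hgx
    exact integral_mono_of_nonneg hfx hgx hfgx

def shearCoord (c₁ c₂ : ℝ) (p : ℝ × ℝ) : ℝ × ℝ :=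
  (p.2 * c₁, Real.sqrt p.2 * (c₂ - p.1 * c₁))

def shearCoordFDeriv (c₁ c₂ : ℝ) (p : ℝ × ℝ) : ℝ × ℝ →L[ℝ] ℝ × ℝ :=
  LinearMap.toContinuousLinearMap
    (Matrix.toLin (Module.Basis.finTwoProd ℝ) (Module.Basis.finTwoProd ℝ)
      !![0, c₁; -(Real.sqrt p.2 * c₁), (c₂ - p.1 * c₁) / (2 * Real.sqrt p.2)])

lemma hasFDerivAt_shearCoord (c₁ c₂ : ℝ) {p : ℝ × ℝ} (hp : 0 < p.2) :
    HasFDerivAt (shearCoord c₁ c₂) (shearCoordFDeriv c₁ c₂ p) p := by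
  rw [shearCoordFDeriv, Matrix.toLin_finTwoProd_toContinuousLinearMap]
  have hsqrt : HasFDerivAt (fun q : ℝ × ℝ => Real.sqrt q.2)
      ((1 / (2 * Real.sqrt p.2)) • ContinuousLinearMap.snd ℝ ℝ ℝ) p :=
    (Real.hasDerivAt_sqrt hp.ne').comp_hasFDerivAt p hasFDerivAt_snd
  have hfst := (hasFDerivAt_snd (𝕜 := ℝ) (p := p)).mul_const c₁
  have hsnd := ((hasFDerivAt_fst (𝕜 := ℝ) (p := p)).mul_const c₁).const_sub c₂
  refine (hfst.prodMk (hsqrt.mul hsnd)).congr_fderiv ?_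
  ext <;> simp [smul_smul, mul_comm, div_eq_mul_inv]

lemma abs_det_shearCoordFDeriv (c₁ c₂ : ℝ) (p : ℝ × ℝ) :
    |(shearCoordFDeriv c₁ c₂ p).det| = Real.sqrt p.2 * c₁ ^ 2 := by
  have hdet : (shearCoordFDeriv c₁ c₂ p).det = Real.sqrt p.2 * c₁ ^ 2 := by
    simp only [shearCoordFDeriv, ContinuousLinearMap.det, LinearMap.coe_toContinuousLinearMap,
      LinearMap.det_toLin, Matrix.det_fin_two_of]
    ring
  rw [hdet, abs_of_nonneg (by positivity)]

lemma injOn_shearCoord {c₁ : ℝ} (c₂ : ℝ) (hc₁ : c₁ ≠ 0) {S : Set (ℝ × ℝ)}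
    (hS : ∀ p ∈ S, 0 < p.2) : Set.InjOn (shearCoord c₁ c₂) S := by
  rintro ⟨s, a⟩ hp ⟨s', a'⟩ hp' h
  simp only [shearCoord, Prod.mk.injEq] at h
  obtain rfl : a = a' := mul_right_cancel₀ hc₁ h.1
  have hsqrt : Real.sqrt a ≠ 0 := (Real.sqrt_pos.mpr (hS _ hp)).ne'
  have : s * c₁ = s' * c₁ := by linarith [mul_left_cancel₀ hsqrt h.2]
  rw [mul_right_cancel₀ hc₁ this]

section ChangeOfVariables

variable {c₁ : ℝ} (c₂ : ℝ) {S : Set (ℝ × ℝ)} {F : ℝ × ℝ → ℝ}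

lemma integrableOn_jacobian_mul_comp_shearCoord (hc₁ : c₁ ≠ 0) (hSm : MeasurableSet S)
    (hS : ∀ p ∈ S, 0 < p.2) (hF : Integrable F) :
    IntegrableOn (fun p => Real.sqrt p.2 * c₁ ^ 2 * F (shearCoord c₁ c₂ p)) S := by
  have h := (integrableOn_image_iff_integrableOn_abs_det_fderiv_smul volume hSm
    (fun p hp => (hasFDerivAt_shearCoord c₁ c₂ (hS p hp)).hasFDerivWithinAt)
    (injOn_shearCoord c₂ hc₁ hS) F).mp hF.integrableOn
  simpa only [abs_det_shearCoordFDeriv, smul_eq_mul] using h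

lemma setIntegral_jacobian_mul_comp_shearCoord_le (hc₁ : c₁ ≠ 0) (hSm : MeasurableSet S)
    (hS : ∀ p ∈ S, 0 < p.2) (hF : Integrable F) (hF0 : 0 ≤ F) :
    ∫ p in S, Real.sqrt p.2 * c₁ ^ 2 * F (shearCoord c₁ c₂ p) ≤ ∫ ω, F ω := by
  have h := integral_image_eq_integral_abs_det_fderiv_smul volume hSm
    (fun p hp => (hasFDerivAt_shearCoord c₁ c₂ (hS p hp)).hasFDerivWithinAt)
    (injOn_shearCoord c₂ hc₁ hS) F
  simp only [abs_det_shearCoordFDeriv, smul_eq_mul] at h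
  exact h ▸ setIntegral_le_integral hF (ae_of_all _ hF0)

end ChangeOfVariables

lemma v2_apply_zero (x y : ℝ) : v2 x y 0 = x := rfl

def measurableEquivV2 : ℝ × ℝ ≃ᵐ E2 :=
  MeasurableEquiv.finTwoArrow.symm.trans (MeasurableEquiv.toLp 2 (Fin 2 → ℝ))

lemma measurableEquivV2_apply (p : ℝ × ℝ) : measurableEquivV2 p = v2 p.1 p.2 := by
  ext i
  fin_cases i <;> rfl

lemma measurePreserving_measurableEquivV2 : MeasurePreserving measurableEquivV2 :=
  (EuclideanSpace.volume_preserving_symm_measurableEquiv_toLp (Fin 2)).symm.comp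
    (volume_preserving_finTwoArrow ℝ).symm

lemma integral_comp_v2 (G : E2 → ℝ) : ∫ p : ℝ × ℝ, G (v2 p.1 p.2) = ∫ ω, G ω := by
  simpa only [measurableEquivV2_apply] using
    measurePreserving_measurableEquivV2.integral_comp' (g := G)

lemma MeasureTheory.Integrable.comp_v2 {G : E2 → ℝ} (hG : Integrable G) :
    Integrable fun p : ℝ × ℝ => G (v2 p.1 p.2) := by
  simpa only [Function.comp_def, measurableEquivV2_apply] using
    (measurePreserving_measurableEquivV2.integrable_comp_emb
      measurableEquivV2.measurableEmbedding).mpr hG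

section Shearlet

variable {hatψ hatμ : E2 → ℂ} {ξ : E2}

def admissibilityIntegrand (hatμ : E2 → ℂ) (ω : ℝ × ℝ) : ℝ :=
  ‖hatμ (v2 ω.1 ω.2)‖ ^ 2 / |ω.1| ^ 2

lemma integral_admissibilityIntegrand (hatμ : E2 → ℂ) :
    ∫ ω, admissibilityIntegrand hatμ ω = Cadm hatμ :=
  integral_comp_v2 fun ω => ‖hatμ ω‖ ^ 2 / |ω 0| ^ 2

lemma IsShearlet.integrable_admissibilityIntegrand (hμ : IsShearlet hatμ 1) :
    Integrable (admissibilityIntegrand hatμ) :=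
  Integrable.comp_v2 (G := fun ω => ‖hatμ ω‖ ^ 2 / |ω 0| ^ 2) hμ

def deltaIntegrand (hatψ : E2 → ℂ) (ξ : E2) (p : ℝ × ℝ) : ℝ :=
  ‖hatψ (v2 (p.2 * ξ 0) (Real.sqrt p.2 * (ξ 1 - p.1 * ξ 0)))‖ ^ 2 * p.2 ^ (-(3 / 2) : ℝ)

lemma Δsh_eq_integral_integral_deltaIntegrand (hatψ : E2 → ℂ) (ξ : E2) :
    Δsh hatψ ξ = ∫ s in Set.Icc (-2 : ℝ) 2, ∫ a in Set.Ioc (0 : ℝ) 1, deltaIntegrand hatψ ξ (s, a) :=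
  rfl

lemma deltaIntegrand_nonneg {p : ℝ × ℝ} (hp : 0 ≤ p.2) : 0 ≤ deltaIntegrand hatψ ξ p :=
  mul_nonneg (by positivity) (Real.rpow_nonneg hp _)

lemma deltaIntegrand_eq_jacobian_mul_admissibilityIntegrand (hξ : ξ 0 ≠ 0) {p : ℝ × ℝ}
    (hp : 0 < p.2) : deltaIntegrand hatμ ξ p =
      Real.sqrt p.2 * ξ 0 ^ 2 * admissibilityIntegrand hatμ (shearCoord (ξ 0) (ξ 1) p) := by
  have hrpow : p.2 ^ (-(3 / 2) : ℝ) = Real.sqrt p.2 / p.2 ^ 2 := by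
    rw [show (-(3 / 2) : ℝ) = 1 / 2 + -2 by norm_num, Real.rpow_add hp, Real.rpow_neg hp.le,
      ← Real.sqrt_eq_rpow, Real.rpow_two, div_eq_mul_inv]
  simp only [deltaIntegrand, admissibilityIntegrand, shearCoord, hrpow, abs_mul, mul_pow,
    sq_abs]
  field_simp

variable {S : Set (ℝ × ℝ)}

lemma IsShearlet.integrableOn_deltaIntegrand (hμ : IsShearlet hatμ 1) (hξ : ξ 0 ≠ 0)
    (hSm : MeasurableSet S) (hS : ∀ p ∈ S, 0 < p.2) : IntegrableOn (deltaIntegrand hatμ ξ) S :=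
  (integrableOn_jacobian_mul_comp_shearCoord (ξ 1) hξ hSm hS
    hμ.integrable_admissibilityIntegrand).congr_fun
    (fun _ hp => (deltaIntegrand_eq_jacobian_mul_admissibilityIntegrand hξ (hS _ hp)).symm) hSm

lemma IsShearlet.setIntegral_deltaIntegrand_le_Cadm (hμ : IsShearlet hatμ 1) (hξ : ξ 0 ≠ 0)
    (hSm : MeasurableSet S) (hS : ∀ p ∈ S, 0 < p.2) :
    ∫ p in S, deltaIntegrand hatμ ξ p ≤ Cadm hatμ := by
  rw [setIntegral_congr_fun hSm
    (fun _ hp => deltaIntegrand_eq_jacobian_mul_admissibilityIntegrand hξ (hS _ hp)),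
    ← integral_admissibilityIntegrand]
  exact setIntegral_jacobian_mul_comp_shearCoord_le (ξ 1) hξ hSm hS
    hμ.integrable_admissibilityIntegrand fun _ => by unfold admissibilityIntegrand; positivity

lemma deltaIntegrand_le_pow_mul {k : ℕ} (hrel : ∀ ω : E2, hatψ ω = ((ω 0 : ℝ) : ℂ) ^ k * hatμ ω)
    {δ : ℝ} (hξδ : |ξ 0| ≤ δ) {p : ℝ × ℝ} (hp : p.2 ∈ Set.Ioc (0 : ℝ) 1) :
    deltaIntegrand hatψ ξ p ≤ δ ^ (2 * k) * deltaIntegrand hatμ ξ p := by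
  have hω₁ : |p.2 * ξ 0| ^ (2 * k) ≤ δ ^ (2 * k) := by
    rw [abs_mul, abs_of_pos hp.1]
    exact pow_le_pow_left₀ (mul_nonneg hp.1.le (abs_nonneg _))
      ((mul_le_of_le_one_left (abs_nonneg _) hp.2).trans hξδ) _
  rw [deltaIntegrand, deltaIntegrand, hrel, v2_apply_zero, norm_mul, norm_pow, Complex.norm_real,
    Real.norm_eq_abs, mul_pow, ← pow_mul, mul_comm k 2, mul_assoc]
  exact mul_le_mul_of_nonneg_right hω₁ (deltaIntegrand_nonneg hp.1.le)

end Shearlet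

theorem delta_small_strip_estimate_M_gt_one_general
    (hatψ hatμ : E2 → ℂ) (M : ℕ)
    (hshμ : IsShearlet hatμ 1)
    (hrel : ∀ ξ : E2, hatψ ξ = ((ξ 0 : ℝ) : ℂ) ^ (M - 1) * hatμ ξ) :
    ∀ δ : ℝ, 0 < δ → δ ≤ 1 → ∀ ξ : E2, ξ 0 ≠ 0 → |ξ 0| ≤ δ →
      Δsh hatψ ξ ≤ Cadm hatμ * δ ^ (2 * (M - 1)) := by
  intro δ _ _ ξ hξ hξδ
  set S := Set.Icc (-2 : ℝ) 2 ×ˢ Set.Ioc (0 : ℝ) 1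
  have hSm : MeasurableSet S := measurableSet_Icc.prod measurableSet_Ioc
  have hS : ∀ p ∈ S, 0 < p.2 := fun p hp => hp.2.1
  have hprod : volume.restrict S =
      (volume.restrict (Set.Icc (-2 : ℝ) 2)).prod (volume.restrict (Set.Ioc (0 : ℝ) 1)) := by
    rw [Measure.prod_restrict, ← Measure.volume_eq_prod]
  have hnonneg : ∀ᵐ p ∂volume.restrict S, 0 ≤ deltaIntegrand hatψ ξ p :=
    (ae_restrict_iff' hSm).mpr (ae_of_all _ fun p hp => deltaIntegrand_nonneg (hS p hp).le)
  have hle : ∀ᵐ p ∂volume.restrict S,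
      deltaIntegrand hatψ ξ p ≤ δ ^ (2 * (M - 1)) * deltaIntegrand hatμ ξ p :=
    (ae_restrict_iff' hSm).mpr (ae_of_all _ fun p hp => deltaIntegrand_le_pow_mul hrel hξδ hp.2)
  have hint := (hshμ.integrableOn_deltaIntegrand hξ hSm hS).const_mul (δ ^ (2 * (M - 1)))
  rw [hprod] at hnonneg hle hint
  calc Δsh hatψ ξ ≤ ∫ p in S, δ ^ (2 * (M - 1)) * deltaIntegrand hatμ ξ p := by
        rw [Δsh_eq_integral_integral_deltaIntegrand, hprod]
        exact integral_integral_le_integral_prod hnonneg hle hint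
    _ = δ ^ (2 * (M - 1)) * ∫ p in S, deltaIntegrand hatμ ξ p := integral_const_mul _ _
    _ ≤ δ ^ (2 * (M - 1)) * Cadm hatμ := by
        gcongr
        exact hshμ.setIntegral_deltaIntegrand_le_Cadm hξ hSm hS
    _ = Cadm hatμ * δ ^ (2 * (M - 1)) := mul_comm _ _

/-- for a shearlet ψ with M > 1 vanishing moments, writing
ψ̂(ξ) = ξ₁^{M−1}μ̂(ξ) with μ a shearlet with one vanishing moment, one has
Δ_ψ(ξ) ≤ C_μ δ^{2(M−1)} for all 0 < δ ≤ 1 and 0 < |ξ₁| ≤ δ. -/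
theorem delta_small_strip_estimate_M_gt_one
    (ψ μ hatψ hatμ : E2 → ℂ) (M : ℕ) (hM : 1 < M)
    (hψ2 : MemLp ψ 2 (volume : Measure E2)) (hμ2 : MemLp μ 2 (volume : Measure E2))
    (hFTψ : IsFT ψ hatψ) (hFTμ : IsFT μ hatμ)
    (hshψ : IsShearlet hatψ M) (hshμ : IsShearlet hatμ 1)
    (hrel : ∀ ξ : E2, hatψ ξ = ((ξ 0 : ℝ) : ℂ) ^ (M - 1) * hatμ ξ) :
    ∀ δ : ℝ, 0 < δ → δ ≤ 1 → ∀ ξ : E2, ξ 0 ≠ 0 → |ξ 0| ≤ δ →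
      Δsh hatψ ξ ≤ Cadm hatμ * δ ^ (2 * (M - 1)) :=
  delta_small_strip_estimate_M_gt_one_general hatψ hatμ M hshμ hrel
end
end
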